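/- (1) For each ⊙ ∈ {□, ∥_A, ∧}: if p₁ ⊙ p₂ ⇒_F| p₃ then there exist p₁', p₂' with p₁ ⇒_F| p₁', p₂ ⇒_F| p₂' and p₃ ≡ p₁' ⊙ p₂'. (2) If p₁ ⇒_F| p₁' and p₂ ⇒_F| p₂', then p₁ ⊙ p₂ ⇒_F| p₁' ⊙ p₂' for ⊙ ∈ {□, ∥_A}, and p₁ ∧ p₂ ⇒_F| p₁' ∧ p₂' provided p₁' ∧ p₂' ∉ F. -/

import Mathlib

open Classical

/-- Visible actions plus the invisible action τ. -/
inductive ActT (Act : Type) : Type where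
  | act : Act → ActT Act
  | tau : ActT Act

/-- Processes of the recursion-free calculus CLL. -/
inductive Proc (Act : Type) : Type where
  | nil  : Proc Act                                -- 0
  | bot  : Proc Act                                -- ⊥
  | pre  : ActT Act → Proc Act → Proc Act          -- α.t
  | ec   : Proc Act → Proc Act → Proc Act          -- t □ t
  | conj : Proc Act → Proc Act → Proc Act          -- t ∧ t
  | disj : Proc Act → Proc Act → Proc Act          -- t ∨ t
  | par  : Set Act → Proc Act → Proc Act → Proc Act -- t ∥_A t

namespace Proc

variable {Act : Type}

/-- Whether a process has a τ-transition (structural stratification used for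
the negative premises of the SOS rules). -/
def hasTau : Proc Act → Prop
  | nil => False
  | bot => False
  | pre a _ => a = ActT.tau
  | ec t₁ t₂ => hasTau t₁ ∨ hasTau t₂
  | conj t₁ t₂ => hasTau t₁ ∨ hasTau t₂
  | disj _ _ => True
  | par _ t₁ t₂ => hasTau t₁ ∨ hasTau t₂

/-- The transition relation, given by the SOS rules of CLL_R. -/
inductive Trans : Proc Act → ActT Act → Proc Act → Prop where
  | pre : Trans (pre α t) α t
  | ecL : Trans t₁ (ActT.act a) t₁' → ¬ hasTau t₂ →
      Trans (ec t₁ t₂) (ActT.act a) t₁'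
  | ecR : ¬ hasTau t₁ → Trans t₂ (ActT.act a) t₂' →
      Trans (ec t₁ t₂) (ActT.act a) t₂'
  | ecTauL : Trans t₁ ActT.tau t₁' → Trans (ec t₁ t₂) ActT.tau (ec t₁' t₂)
  | ecTauR : Trans t₂ ActT.tau t₂' → Trans (ec t₁ t₂) ActT.tau (ec t₁ t₂')
  | conjAct : Trans t₁ (ActT.act a) t₁' → Trans t₂ (ActT.act a) t₂' →
      Trans (conj t₁ t₂) (ActT.act a) (conj t₁' t₂')
  | conjTauL : Trans t₁ ActT.tau t₁' → Trans (conj t₁ t₂) ActT.tau (conj t₁' t₂)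
  | conjTauR : Trans t₂ ActT.tau t₂' → Trans (conj t₁ t₂) ActT.tau (conj t₁ t₂')
  | disjL : Trans (disj t₁ t₂) ActT.tau t₁
  | disjR : Trans (disj t₁ t₂) ActT.tau t₂
  | parTauL : Trans t₁ ActT.tau t₁' → Trans (par A t₁ t₂) ActT.tau (par A t₁' t₂)
  | parTauR : Trans t₂ ActT.tau t₂' → Trans (par A t₁ t₂) ActT.tau (par A t₁ t₂')
  | parL : a ∉ A → Trans t₁ (ActT.act a) t₁' → ¬ hasTau t₂ →
      Trans (par A t₁ t₂) (ActT.act a) (par A t₁' t₂)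
  | parR : a ∉ A → ¬ hasTau t₁ → Trans t₂ (ActT.act a) t₂' →
      Trans (par A t₁ t₂) (ActT.act a) (par A t₁ t₂')
  | parSync : a ∈ A → Trans t₁ (ActT.act a) t₁' → Trans t₂ (ActT.act a) t₂' →
      Trans (par A t₁ t₂) (ActT.act a) (par A t₁' t₂')

/-- The ready set I(p). -/
def ready (p : Proc Act) : Set (ActT Act) := {α | ∃ q, Trans p α q}

/-- p is stable if it has no τ-transition. -/
def Stable (p : Proc Act) : Prop := ∀ q, ¬ Trans p ActT.tau q

/-- The inconsistency predicate F, as the least predicate closed under the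
predicative rules of CLL_R. -/
inductive Fp : Proc Act → Prop where
  | bot : Fp bot
  | pre : Fp t → Fp (pre α t)
  | disj : Fp t₁ → Fp t₂ → Fp (disj t₁ t₂)
  | ecL : Fp t₁ → Fp (ec t₁ t₂)
  | ecR : Fp t₂ → Fp (ec t₁ t₂)
  | parL : Fp t₁ → Fp (par A t₁ t₂)
  | parR : Fp t₂ → Fp (par A t₁ t₂)
  | conjL : Fp t₁ → Fp (conj t₁ t₂)
  | conjR : Fp t₂ → Fp (conj t₁ t₂)
  | conjReady : Stable (conj t₁ t₂) → ready t₁ ≠ ready t₂ → Fp (conj t₁ t₂)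
  | conjSucc : Trans (conj t₁ t₂) α s → (∀ y, Trans (conj t₁ t₂) α y → Fp y) →
      Fp (conj t₁ t₂)
  | conjStable :
      (∀ y, Relation.ReflTransGen (fun x z => Trans x ActT.tau z) (conj t₁ t₂) y →
        Stable y → Fp y) →
      Fp (conj t₁ t₂)

/-- One τ-step with both endpoints consistent. -/
def tauStepF (p q : Proc Act) : Prop := Trans p ActT.tau q ∧ ¬ Fp p ∧ ¬ Fp q

/-- p ⇒_F| q : a sequence of τ-transitions from p to q, all states outside F,
with q stable. -/
def epsF (p q : Proc Act) : Prop :=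
  Relation.ReflTransGen tauStepF p q ∧ ¬ Fp p ∧ ¬ Fp q ∧ Stable q

/-- p =a⇒_F| q. -/
def wkF (a : Act) (p q : Proc Act) : Prop :=
  ∃ r s, Relation.ReflTransGen tauStepF p r ∧ ¬ Fp p ∧ ¬ Fp r ∧
    Trans r (ActT.act a) s ∧ ¬ Fp s ∧
    Relation.ReflTransGen tauStepF s q ∧ ¬ Fp q ∧ Stable q

/-- R is a stable ready simulation. -/
def StableRS (R : Proc Act → Proc Act → Prop) : Prop :=
  ∀ p q, R p q →
    Stable p ∧ Stable q ∧
    (¬ Fp p → ¬ Fp q) ∧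
    (∀ a p', wkF a p p' → ∃ q', wkF a q q' ∧ R p' q') ∧
    (¬ Fp p → ready p = ready q)

/-- p ⊏̃_RS q. -/
def rsLT (p q : Proc Act) : Prop := ∃ R, StableRS R ∧ R p q

/-- p ⊑_RS q. -/
def rsLE (p q : Proc Act) : Prop :=
  ∀ p', epsF p p' → ∃ q', epsF q q' ∧ rsLT p' q'

/-- p =_RS q. -/
def rsEq (p q : Proc Act) : Prop := rsLE p q ∧ rsLE q p

/-- Basic process terms T(Σ_B): no ⊥ and no ∧. -/
inductive Basic : Proc Act → Prop where
  | nil : Basic nil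
  | pre : Basic t → Basic (pre α t)
  | disj : Basic t₁ → Basic t₂ → Basic (disj t₁ t₂)
  | ec : Basic t₁ → Basic t₂ → Basic (ec t₁ t₂)
  | par : Basic t₁ → Basic t₂ → Basic (par A t₁ t₂)

/-- General external choice □ over a finite sequence (left-nested). -/
def ecList : List (Proc Act) → Proc Act
  | [] => nil
  | t :: ts => ts.foldl ec t

/-- General disjunction ⋁ over a nonempty finite sequence (left-nested). -/
def djList : List (Proc Act) → Proc Act
  | [] => bot
  | t :: ts => ts.foldl disj t

/-- □_{i<n} a_i.t_i for a sequence of prefixed terms. -/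
def ecPre (l : List (Act × Proc Act)) : Proc Act :=
  ecList (l.map fun x => pre (ActT.act x.1) x.2)

/-- The expansion term E = ((□Ω₁) □ (□Ω₂)) □ (□Ω₃). -/
noncomputable def expTerm (A : Set Act) (l₁ l₂ : List (Act × Proc Act)) : Proc Act :=
  ec (ec
      (ecList ((l₁.filter fun x => decide (x.1 ∉ A)).map
        fun x => pre (ActT.act x.1) (par A x.2 (ecPre l₂))))
      (ecList ((l₂.filter fun x => decide (x.1 ∉ A)).map
        fun x => pre (ActT.act x.1) (par A (ecPre l₁) x.2))))
    (ecList (l₁.flatMap fun x =>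
      (l₂.filter fun y => decide (y.1 = x.1 ∧ x.1 ∈ A)).map
        fun y => pre (ActT.act x.1) (par A x.2 y.2)))

/-- Normal forms NF_B. -/
inductive NFB : Proc Act → Prop where
  | mk (ls : List (List (Act × Proc Act))) (hne : ls ≠ [])
      (hnodup : ∀ l ∈ ls, (l.map Prod.fst).Nodup)
      (hsub : ∀ l ∈ ls, ∀ x ∈ l, NFB x.2) :
      NFB (djList (ls.map ecPre))

/-- NF = NF_B ∪ {⊥}. -/
def NF (p : Proc Act) : Prop := NFB p ∨ p = bot

/-- Derivability ⊢ t ≤ t' in the proof system AX_CLL. -/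
inductive Deriv : Proc Act → Proc Act → Prop where
  | refl (t) : Deriv t t
  | trans : Deriv t t' → Deriv t' t'' → Deriv t t''
  | mono_pre : Deriv t t' → Deriv (pre α t) (pre α t')
  | mono_ec : Deriv s s' → Deriv t t' → Deriv (ec s t) (ec s' t')
  | mono_conj : Deriv s s' → Deriv t t' → Deriv (conj s t) (conj s' t')
  | mono_disj : Deriv s s' → Deriv t t' → Deriv (disj s t) (disj s' t')
  | mono_par : Deriv s s' → Deriv t t' → Deriv (par A s t) (par A s' t')
  -- external choice
  | ec_comm : Deriv (ec x y) (ec y x)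
  | ec_assoc₁ : Deriv (ec (ec x y) z) (ec x (ec y z))
  | ec_assoc₂ : Deriv (ec x (ec y z)) (ec (ec x y) z)
  | ec_idem₁ : Deriv (ec x x) x
  | ec_idem₂ : Deriv x (ec x x)
  | ec_nil₁ : Deriv (ec x nil) x
  | ec_nil₂ : Deriv x (ec x nil)
  | ec_bot₁ : Deriv (ec x bot) bot
  | ec_bot₂ : Deriv bot (ec x bot)
  -- disjunction
  | disj_comm : Deriv (disj x y) (disj y x)
  | disj_assoc₁ : Deriv (disj x (disj y z)) (disj (disj x y) z)
  | disj_assoc₂ : Deriv (disj (disj x y) z) (disj x (disj y z))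
  | disj_idem₁ : Deriv (disj x x) x
  | disj_idem₂ : Deriv x (disj x x)
  | disj_bot₁ : Deriv (disj x bot) x
  | disj_bot₂ : Deriv x (disj x bot)
  | disj_le : Deriv x (disj x y)
  -- conjunction
  | conj_comm : Deriv (conj x y) (conj y x)
  | conj_idem₁ : Deriv (conj x x) x
  | conj_idem₂ : Deriv x (conj x x)
  | conj_bot₁ : Deriv (conj x bot) bot
  | conj_bot₂ : Deriv bot (conj x bot)
  -- prefixing
  | pre_bot₁ : Deriv (pre (ActT.act a) bot) bot
  | pre_bot₂ : Deriv bot (pre (ActT.act a) bot)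
  | tau_pre₁ : Deriv (pre ActT.tau x) x
  | tau_pre₂ : Deriv x (pre ActT.tau x)
  -- parallel
  | par_comm : Deriv (par A x y) (par A y x)
  | par_bot₁ : Deriv (par A x bot) bot
  | par_bot₂ : Deriv bot (par A x bot)
  -- distribution over disjunction
  | ds_ec : Deriv (ec x (disj y z)) (disj (ec x y) (ec x z))
  | ds_conj : Deriv (conj x (disj y z)) (disj (conj x y) (conj x z))
  | ds_par : Deriv (par A x (disj y z)) (disj (par A x y) (par A x z))
  | ds_pre : Basic x → Basic y →
      Deriv (pre (ActT.act a) (disj x y)) (ec (pre (ActT.act a) x) (pre (ActT.act a) y))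
  -- external choice and conjunction
  | ecc1₁ (l₁ l₂ : List (Act × Proc Act)) :
      {a | a ∈ l₁.map Prod.fst} ≠ {a | a ∈ l₂.map Prod.fst} →
      Deriv (conj (ecPre l₁) (ecPre l₂)) bot
  | ecc1₂ (l₁ l₂ : List (Act × Proc Act)) :
      {a | a ∈ l₁.map Prod.fst} ≠ {a | a ∈ l₂.map Prod.fst} →
      Deriv bot (conj (ecPre l₁) (ecPre l₂))
  | ecc2 (l : List (Act × Proc Act × Proc Act)) :
      Deriv (ecPre (l.map fun x => (x.1, conj x.2.1 x.2.2)))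
            (conj (ecPre (l.map fun x => (x.1, x.2.1)))
                  (ecPre (l.map fun x => (x.1, x.2.2))))
  | ecc3 (l : List (Act × Proc Act × Proc Act)) :
      (l.map Prod.fst).Nodup →
      Deriv (conj (ecPre (l.map fun x => (x.1, x.2.1)))
                  (ecPre (l.map fun x => (x.1, x.2.2))))
            (ecPre (l.map fun x => (x.1, conj x.2.1 x.2.2)))
  -- expansion
  | exp1 (A : Set Act) (l₁ l₂ : List (Act × Proc Act)) :
      Deriv (par A (ecPre l₁) (ecPre l₂)) (expTerm A l₁ l₂)
  | exp2 (A : Set Act) (l₁ l₂ : List (Act × Proc Act)) :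
      (∀ x ∈ l₁, Basic x.2) → (∀ x ∈ l₂, Basic x.2) →
      Deriv (expTerm A l₁ l₂) (par A (ecPre l₁) (ecPre l₂))

end Proc

namespace Proc

/-!
The τ-moves of `p₁ □ p₂`, `p₁ ∥_A p₂` and `p₁ ∧ p₂` are exactly the interleavings of τ-moves of
the components, and each operator is inconsistent as soon as one component is. Hence a consistent
τ-path out of a composition projects to consistent τ-paths of the components, and conversely
component paths interleave into a τ-path of the composition. For `□` and `∥_A` inconsistency is
exactly inconsistency of a component, so the interleaved path stays consistent. For `∧` it is not:
there consistency is propagated backwards from the consistent stable end `p₁' ∧ p₂'`, because a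
conjunction of consistent processes that can τ-move to a consistent state and τ-reach a consistent
stable state is not in `F`.
-/

open Relation

variable {Act : Type}

abbrev TauStep (p q : Proc Act) : Prop := Trans p ActT.tau q

def TauInterleaving (op : Proc Act → Proc Act → Proc Act) : Prop :=
  ∀ t₁ t₂ q, TauStep (op t₁ t₂) q ↔
    (∃ t₁', TauStep t₁ t₁' ∧ q = op t₁' t₂) ∨ (∃ t₂', TauStep t₂ t₂' ∧ q = op t₁ t₂')

inductive InterleavedStepF (op : Proc Act → Proc Act → Proc Act) : Proc Act → Proc Act → Prop
  | left {x x' y : Proc Act} : tauStepF x x' → ¬ Fp y → InterleavedStepF op (op x y) (op x' y)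
  | right {x y y' : Proc Act} : ¬ Fp x → tauStepF y y' → InterleavedStepF op (op x y) (op x y')

theorem tauInterleaving_ec : TauInterleaving (ec : Proc Act → Proc Act → Proc Act) := by
  refine fun t₁ t₂ q => ⟨fun h => ?_, ?_⟩
  · cases h with
    | ecTauL h => exact .inl ⟨_, h, rfl⟩
    | ecTauR h => exact .inr ⟨_, h, rfl⟩
  · rintro (⟨_, h, rfl⟩ | ⟨_, h, rfl⟩)
    exacts [.ecTauL h, .ecTauR h]

theorem tauInterleaving_par (A : Set Act) : TauInterleaving (par A) := by
  refine fun t₁ t₂ q => ⟨fun h => ?_, ?_⟩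
  · cases h with
    | parTauL h => exact .inl ⟨_, h, rfl⟩
    | parTauR h => exact .inr ⟨_, h, rfl⟩
  · rintro (⟨_, h, rfl⟩ | ⟨_, h, rfl⟩)
    exacts [.parTauL h, .parTauR h]

theorem tauInterleaving_conj : TauInterleaving (conj : Proc Act → Proc Act → Proc Act) := by
  refine fun t₁ t₂ q => ⟨fun h => ?_, ?_⟩
  · cases h with
    | conjTauL h => exact .inl ⟨_, h, rfl⟩
    | conjTauR h => exact .inr ⟨_, h, rfl⟩
  · rintro (⟨_, h, rfl⟩ | ⟨_, h, rfl⟩)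
    exacts [.conjTauL h, .conjTauR h]

theorem fp_ec_iff {t₁ t₂ : Proc Act} : Fp (ec t₁ t₂) ↔ Fp t₁ ∨ Fp t₂ := by
  refine ⟨fun h => ?_, fun h => h.elim Fp.ecL Fp.ecR⟩
  cases h with
  | ecL h => exact .inl h
  | ecR h => exact .inr h

theorem fp_par_iff {A : Set Act} {t₁ t₂ : Proc Act} : Fp (par A t₁ t₂) ↔ Fp t₁ ∨ Fp t₂ := by
  refine ⟨fun h => ?_, fun h => h.elim Fp.parL Fp.parR⟩
  cases h with
  | parL h => exact .inl h
  | parR h => exact .inr h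

theorem reflTransGen_interleavedStepF {op : Proc Act → Proc Act → Proc Act}
    {p₁ p₂ p₁' p₂' : Proc Act} (h₁ : ReflTransGen tauStepF p₁ p₁') (hp₂ : ¬ Fp p₂)
    (h₂ : ReflTransGen tauStepF p₂ p₂') (hp₁' : ¬ Fp p₁') :
    ReflTransGen (InterleavedStepF op) (op p₁ p₂) (op p₁' p₂') :=
  (h₁.lift (op · p₂) fun _ _ h => .left h hp₂).trans
    (h₂.lift (op p₁' ·) fun _ _ h => .right hp₁' h)

namespace TauInterleaving

variable {op : Proc Act → Proc Act → Proc Act} (hop : TauInterleaving op)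
include hop

theorem stable_iff {t₁ t₂ : Proc Act} : Stable (op t₁ t₂) ↔ Stable t₁ ∧ Stable t₂ := by
  refine ⟨fun h => ⟨fun q hq => h _ ((hop _ _ _).2 (.inl ⟨q, hq, rfl⟩)),
    fun q hq => h _ ((hop _ _ _).2 (.inr ⟨q, hq, rfl⟩))⟩, fun ⟨h₁, h₂⟩ q hq => ?_⟩
  rcases (hop t₁ t₂ q).1 hq with ⟨_, h, _⟩ | ⟨_, h, _⟩
  exacts [h₁ _ h, h₂ _ h]

theorem tauStep_of_interleavedStepF {s s' : Proc Act} (h : InterleavedStepF op s s') :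
    TauStep s s' := by
  cases h with
  | left h _ => exact (hop _ _ _).2 (.inl ⟨_, h.1, rfl⟩)
  | right _ h => exact (hop _ _ _).2 (.inr ⟨_, h.1, rfl⟩)

theorem reflTransGen_tauStepF_decomp (hF : ∀ t₁ t₂, Fp t₁ ∨ Fp t₂ → Fp (op t₁ t₂))
    {p₁ p₂ p₃ : Proc Act} (h : ReflTransGen tauStepF (op p₁ p₂) p₃) :
    ∃ q₁ q₂, p₃ = op q₁ q₂ ∧ ReflTransGen tauStepF p₁ q₁ ∧ ReflTransGen tauStepF p₂ q₂ := by
  induction h with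
  | refl => exact ⟨p₁, p₂, rfl, .refl, .refl⟩
  | tail _ hstep ih =>
    obtain ⟨q₁, q₂, rfl, h₁, h₂⟩ := ih
    obtain ⟨hτ, hs, hs'⟩ := hstep
    rcases (hop _ _ _).1 hτ with ⟨r, hr, rfl⟩ | ⟨r, hr, rfl⟩
    · exact ⟨r, q₂, rfl, h₁.tail ⟨hr, fun h => hs (hF _ _ (.inl h)),
        fun h => hs' (hF _ _ (.inl h))⟩, h₂⟩
    · exact ⟨q₁, r, rfl, h₁, h₂.tail ⟨hr, fun h => hs (hF _ _ (.inr h)),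
        fun h => hs' (hF _ _ (.inr h))⟩⟩

theorem epsF_decomp (hF : ∀ t₁ t₂, Fp t₁ ∨ Fp t₂ → Fp (op t₁ t₂))
    {p₁ p₂ p₃ : Proc Act} (h : epsF (op p₁ p₂) p₃) :
    ∃ q₁ q₂, epsF p₁ q₁ ∧ epsF p₂ q₂ ∧ p₃ = op q₁ q₂ := by
  obtain ⟨hpath, hs, he, hst⟩ := h
  obtain ⟨q₁, q₂, rfl, h₁, h₂⟩ := hop.reflTransGen_tauStepF_decomp hF hpath
  obtain ⟨hst₁, hst₂⟩ := hop.stable_iff.1 hst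
  exact ⟨q₁, q₂, ⟨h₁, fun h => hs (hF _ _ (.inl h)), fun h => he (hF _ _ (.inl h)), hst₁⟩,
    ⟨h₂, fun h => hs (hF _ _ (.inr h)), fun h => he (hF _ _ (.inr h)), hst₂⟩, rfl⟩

theorem epsF_op (hF : ∀ t₁ t₂, Fp (op t₁ t₂) ↔ Fp t₁ ∨ Fp t₂)
    {p₁ p₂ p₁' p₂' : Proc Act} (h₁ : epsF p₁ p₁') (h₂ : epsF p₂ p₂') :
    epsF (op p₁ p₂) (op p₁' p₂') := by
  obtain ⟨hpath₁, hs₁, he₁, hst₁⟩ := h₁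
  obtain ⟨hpath₂, hs₂, he₂, hst₂⟩ := h₂
  have hstep : ∀ s s', InterleavedStepF op s s' → tauStepF s s' := by
    intro s s' h
    refine ⟨hop.tauStep_of_interleavedStepF h, ?_⟩
    cases h with
    | left h hy => simpa only [hF, not_or] using ⟨⟨h.2.1, hy⟩, h.2.2, hy⟩
    | right hx h => simpa only [hF, not_or] using ⟨⟨hx, h.2.1⟩, hx, h.2.2⟩
  refine ⟨ReflTransGen.mono hstep _ _ (reflTransGen_interleavedStepF hpath₁ hs₂ hpath₂ he₁),
    ?_, ?_, hop.stable_iff.2 ⟨hst₁, hst₂⟩⟩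
  · simpa only [hF, not_or] using ⟨hs₁, hs₂⟩
  · simpa only [hF, not_or] using ⟨he₁, he₂⟩

end TauInterleaving

theorem hasTau_of_trans {t t' : Proc Act} {α : ActT Act} (h : Trans t α t') (hα : α = ActT.tau) :
    hasTau t := by
  induction h <;> simp_all [hasTau]

theorem not_hasTau_of_trans {t t' : Proc Act} {α : ActT Act} (h : Trans t α t')
    (hα : α ≠ ActT.tau) : ¬ hasTau t := by
  induction h <;> simp_all [hasTau]

/-- A τ-step rules out `conjReady`, and also a visible `conjSucc`, since a conjunction moves
visibly only when both components are τ-free; the consistent successor `r` and the consistent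
stable descendant `z` rule out the remaining rules. -/
theorem not_fp_conj {q₁ q₂ r z : Proc Act} (h₁ : ¬ Fp q₁) (h₂ : ¬ Fp q₂)
    (hτ : TauStep (conj q₁ q₂) r) (hr : ¬ Fp r)
    (hreach : ReflTransGen TauStep (conj q₁ q₂) z) (hz : Stable z) (hzF : ¬ Fp z) :
    ¬ Fp (conj q₁ q₂) := by
  intro hF
  cases hF with
  | conjL h => exact h₁ h
  | conjR h => exact h₂ h
  | conjReady hs _ => exact hs _ hτ
  | conjSucc htr hall =>
    cases htr with
    | conjAct ha₁ ha₂ =>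
      cases hτ with
      | conjTauL h => exact not_hasTau_of_trans ha₁ nofun (hasTau_of_trans h rfl)
      | conjTauR h => exact not_hasTau_of_trans ha₂ nofun (hasTau_of_trans h rfl)
    | conjTauL _ => exact hr (hall _ hτ)
    | conjTauR _ => exact hr (hall _ hτ)
  | conjStable hall => exact hzF (hall _ hreach hz)

theorem reflTransGen_tauStepF_of_interleavedStepF_conj {s t : Proc Act}
    (h : ReflTransGen (InterleavedStepF conj) s t) (ht : Stable t) (htF : ¬ Fp t) :
    ReflTransGen tauStepF s t ∧ ¬ Fp s := by
  induction h using ReflTransGen.head_induction_on with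
  | refl => exact ⟨.refl, htF⟩
  | @head u u' hstep hrest ih =>
    obtain ⟨hpath, hu'⟩ := ih
    have hτ := tauInterleaving_conj.tauStep_of_interleavedStepF hstep
    have hreach : ReflTransGen TauStep u t := .head hτ <|
      ReflTransGen.mono (fun _ _ => tauInterleaving_conj.tauStep_of_interleavedStepF) _ _ hrest
    have hu : ¬ Fp u := by
      cases hstep with
      | left hx hy => exact not_fp_conj hx.2.1 hy hτ hu' hreach ht htF
      | right hx hy => exact not_fp_conj hx hy.2.1 hτ hu' hreach ht htF
    exact ⟨.head ⟨hτ, hu, hu'⟩ hpath, hu⟩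

theorem epsF_conj {p₁ p₂ p₁' p₂' : Proc Act} (h₁ : epsF p₁ p₁') (h₂ : epsF p₂ p₂')
    (hF : ¬ Fp (conj p₁' p₂')) : epsF (conj p₁ p₂) (conj p₁' p₂') := by
  obtain ⟨hpath₁, -, he₁, hst₁⟩ := h₁
  obtain ⟨hpath₂, hs₂, -, hst₂⟩ := h₂
  have hst := tauInterleaving_conj.stable_iff.2 ⟨hst₁, hst₂⟩
  obtain ⟨hpath, hs⟩ := reflTransGen_tauStepF_of_interleavedStepF_conj
    (reflTransGen_interleavedStepF hpath₁ hs₂ hpath₂ he₁) hst hF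
  exact ⟨hpath, hs, hF, hst⟩

/-- Consistent stable ε-derivatives of compositions decompose, and conversely. -/
theorem stmt4 {Act : Type} :
    (∀ p₁ p₂ p₃ : Proc Act, epsF (ec p₁ p₂) p₃ →
      ∃ p₁' p₂', epsF p₁ p₁' ∧ epsF p₂ p₂' ∧ p₃ = ec p₁' p₂') ∧
    (∀ (A : Set Act) (p₁ p₂ p₃ : Proc Act), epsF (par A p₁ p₂) p₃ →
      ∃ p₁' p₂', epsF p₁ p₁' ∧ epsF p₂ p₂' ∧ p₃ = par A p₁' p₂') ∧
    (∀ p₁ p₂ p₃ : Proc Act, epsF (conj p₁ p₂) p₃ →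
      ∃ p₁' p₂', epsF p₁ p₁' ∧ epsF p₂ p₂' ∧ p₃ = conj p₁' p₂') ∧
    (∀ p₁ p₂ p₁' p₂' : Proc Act, epsF p₁ p₁' → epsF p₂ p₂' →
      epsF (ec p₁ p₂) (ec p₁' p₂')) ∧
    (∀ (A : Set Act) (p₁ p₂ p₁' p₂' : Proc Act), epsF p₁ p₁' → epsF p₂ p₂' →
      epsF (par A p₁ p₂) (par A p₁' p₂')) ∧
    (∀ p₁ p₂ p₁' p₂' : Proc Act, epsF p₁ p₁' → epsF p₂ p₂' →
      ¬ Fp (conj p₁' p₂') → epsF (conj p₁ p₂) (conj p₁' p₂')) :=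
  ⟨fun _ _ _ => tauInterleaving_ec.epsF_decomp fun _ _ => fp_ec_iff.2,
    fun A _ _ _ => (tauInterleaving_par A).epsF_decomp fun _ _ => fp_par_iff.2,
    fun _ _ _ => tauInterleaving_conj.epsF_decomp fun _ _ h => h.elim Fp.conjL Fp.conjR,
    fun _ _ _ _ => tauInterleaving_ec.epsF_op fun _ _ => fp_ec_iff,
    fun A _ _ _ _ => (tauInterleaving_par A).epsF_op fun _ _ => fp_par_iff,
    fun _ _ _ _ => epsF_conj⟩

end Proc
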